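/- arXiv:0911.3522 — 3 statements merged into one kernel-verified Lean document; each statement's English description precedes it below -/
import Mathlib

section
/- Let K be a field equipped with an absolute value |·| : K → ℝ, let X and Y be finite sets and f : X → Y a map. If a = (a_x) ∈ K^X satisfies ∑_{x∈X} |a_x|² ≤ 1, and b = (b_x) ∈ K^X satisfies ∑_{x∈f⁻¹(y)} |b_x|² ≤ 1 for every y ∈ Y, then the contraction (a,b) ∈ K^Y defined by (a,b)_y = ∑_{x∈f⁻¹(y)} a_x·b_x satisfies ∑_{y∈Y} |∑_{x∈f⁻¹(y)} a_x·b_x|² ≤ 1. -/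
open scoped Classical

open Finset

theorem AbsoluteValue.sq_sum_mul_le {R S ι : Type*} [Semiring R] [CommRing S] [LinearOrder S]
    [IsStrictOrderedRing S] (v : AbsoluteValue R S) (s : Finset ι) (a b : ι → R) :
    v (∑ i ∈ s, a i * b i) ^ 2 ≤ (∑ i ∈ s, v (a i) ^ 2) * ∑ i ∈ s, v (b i) ^ 2 :=
  calc v (∑ i ∈ s, a i * b i) ^ 2 ≤ (∑ i ∈ s, v (a i) * v (b i)) ^ 2 := by
        gcongr
        simpa only [map_mul] using v.sum_le s (fun i => a i * b i)
    _ ≤ (∑ i ∈ s, v (a i) ^ 2) * ∑ i ∈ s, v (b i) ^ 2 := sum_mul_sq_le_sq_mul_sq s _ _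

theorem AbsoluteValue.sum_sq_sum_fiberwise_mul_le {R S X Y : Type*} [Semiring R] [CommRing S]
    [LinearOrder S] [IsStrictOrderedRing S] [Fintype X] [Fintype Y]
    (v : AbsoluteValue R S) (f : X → Y) (a b : X → R)
    (hb : ∀ y, ∑ x ∈ univ.filter (fun x => f x = y), v (b x) ^ 2 ≤ 1) :
    ∑ y, v (∑ x ∈ univ.filter (fun x => f x = y), a x * b x) ^ 2 ≤ ∑ x, v (a x) ^ 2 :=
  calc ∑ y, v (∑ x ∈ univ.filter (fun x => f x = y), a x * b x) ^ 2
      ≤ ∑ y, ∑ x ∈ univ.filter (fun x => f x = y), v (a x) ^ 2 := by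
        refine sum_le_sum fun y _ => (v.sq_sum_mul_le _ a b).trans ?_
        exact mul_le_of_le_one_right (sum_nonneg fun x _ => sq_nonneg _) (hb y)
    _ = ∑ x, v (a x) ^ 2 := sum_fiberwise _ _ _

/-- **Closure of the unit ℓ²-balls under contraction (Cauchy–Schwarz).**
Let `K` be a field with an absolute value `v : K → ℝ`, `X`, `Y` finite sets and
`f : X → Y` a map.  If `a ∈ K^X` lies in the unit ℓ²-ball, and for every `y ∈ Y`
the restriction of `b ∈ K^X` to the fiber `f⁻¹(y)` lies in the unit ℓ²-ball, then
the contraction `(a, b)_y = ∑_{x ∈ f⁻¹(y)} a_x * b_x` lies in the unit ℓ²-ball of `K^Y`. -/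
theorem realPrime_contr_mem_unitBall (K : Type*) [Field K] (v : AbsoluteValue K ℝ)
    (X Y : Type*) [Fintype X] [Fintype Y] (f : X → Y)
    (a : X → K) (ha : ∑ x : X, v (a x) ^ 2 ≤ 1)
    (b : X → K)
    (hb : ∀ y : Y, ∑ x ∈ Finset.univ.filter (fun x => f x = y), v (b x) ^ 2 ≤ 1) :
    ∑ y : Y, v (∑ x ∈ Finset.univ.filter (fun x => f x = y), a x * b x) ^ 2 ≤ 1 :=
  (v.sum_sq_sum_fiberwise_mul_le f a b hb).trans ha
end

section
/- Every generalized ring A in which 1 ≠ 0 in A_{[1]} possesses a maximal proper h-ideal, i.e. a proper h-ideal not strictly contained in any other proper h-ideal. -/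
open scoped Classical

noncomputable section

/-! ### Partially defined maps of finite sets -/

/-- Composition of partially defined maps of sets (`Set_•`). -/
def pcomp {X Y Z : Type} (g : Y → Option Z) (f : X → Option Y) : X → Option Z :=
  fun x => (f x).bind g

/-- The fiber of a partially defined map over a point of the target. -/
abbrev pfib {X Y : Type} (f : X → Option Y) (y : Y) : Type := {x : X // f x = some y}

/-- The fiber of the identity partial map over `x` is a singleton. -/
def idFiberEquiv {X : Type} (x : X) : Fin 1 ≃ pfib (fun x' : X => some x') x where
  toFun _ := ⟨x, rfl⟩
  invFun _ := 0
  left_inv _ := Subsingleton.elim _ _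
  right_inv p := Subtype.ext (Option.some.inj p.2).symm

/-- The fiber of the constant (total) map to the point `[1]` is everything. -/
def constFiberEquiv (X : Type) (z : Fin 1) :
    X ≃ pfib (fun _ : X => some (0 : Fin 1)) z where
  toFun x := ⟨x, congrArg some (Subsingleton.elim (0 : Fin 1) z)⟩
  invFun p := p.1
  left_inv _ := rfl
  right_inv p := rfl

/-- The fiber of (the graph of) a bijection is a singleton. -/
def equivFiberEquiv {X Y : Type} (e : X ≃ Y) (y : Y) :
    Fin 1 ≃ pfib (fun x : X => some (e x)) y where
  toFun _ := ⟨e.symm y, congrArg some (e.apply_symm_apply y)⟩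
  invFun _ := 0
  left_inv _ := Subsingleton.elim _ _
  right_inv p := Subtype.ext ((Equiv.symm_apply_eq e).mpr (Option.some.inj p.2).symm)

/-- The fiber of the map `[1] → X` with image `{x}` over `x' = x` is a singleton. -/
def pointFiberEquiv {X : Type} {x x' : X} (h : x = x') :
    Fin 1 ≃ pfib (fun _ : Fin 1 => some x) x' where
  toFun z := ⟨z, congrArg some h⟩
  invFun p := p.1
  left_inv _ := rfl
  right_inv p := rfl

/-- Restriction of `f` to the fiber of `pcomp g f` over `z`, as a partial map into
the fiber of `g` over `z`. -/
def resMap {X Y Z : Type} (g : Y → Option Z) (f : X → Option Y) (z : Z) :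
    pfib (pcomp g f) z → Option (pfib g z) :=
  fun x => (f x.1).bind fun y => if h : g y = some z then some ⟨y, h⟩ else none

/-- Identification of the fibers of the restriction `resMap g f z` with fibers of `f`. -/
def resFiberEquiv {X Y Z : Type} (g : Y → Option Z) (f : X → Option Y) (z : Z)
    (p : pfib g z) : pfib f p.1 ≃ pfib (resMap g f z) p where
  toFun x := ⟨⟨x.1, by show (f x.1).bind g = some z; rw [x.2, Option.bind_some, p.2]⟩, by
    show (f x.1).bind _ = some p
    rw [x.2, Option.bind_some, dif_pos p.2]⟩
  invFun q := ⟨q.1.1, by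
    have h := q.2
    unfold resMap at h
    rcases hf : f q.1.1 with _ | y
    · rw [hf, Option.bind_none] at h
      cases h
    · rw [hf, Option.bind_some] at h
      by_cases hg : g y = some z
      · rw [dif_pos hg] at h
        have hy : y = p.1 := congrArg Subtype.val (Option.some.inj h)
        exact congrArg some hy
      · rw [dif_neg hg] at h
        cases h⟩
  left_inv x := Subtype.ext rfl
  right_inv q := Subtype.ext (Subtype.ext rfl)

/-! ### Fibered products -/

/-- The fibered product of two partial maps `g : Z ⇀ Y` and `f : X ⇀ Y`. -/
abbrev FP {X Y Z : Type} (g : Z → Option Y) (f : X → Option Y) : Type :=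
  {p : Z × X // ∃ y : Y, g p.1 = some y ∧ f p.2 = some y}

/-- First projection of the fibered product, as a partial map. -/
def fpFst {X Y Z : Type} (g : Z → Option Y) (f : X → Option Y) : FP g f → Option Z :=
  fun p => some p.1.1

/-- Second projection of the fibered product, as a partial map. -/
def fpSnd {X Y Z : Type} (g : Z → Option Y) (f : X → Option Y) : FP g f → Option X :=
  fun p => some p.1.2

/-- Identification of the fiber of the second projection of `Z ×_Y X` over `x`
with the fiber of `g` over `f x`. -/
def fpFiberSnd {X Y Z : Type} (g : Z → Option Y) (f : X → Option Y) {x : X} {y : Y}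
    (hy : f x = some y) : pfib g y ≃ pfib (fpSnd g f) x where
  toFun w := ⟨⟨(w.1, x), ⟨y, w.2, hy⟩⟩, rfl⟩
  invFun q := ⟨q.1.1.1, by
    obtain ⟨y', hg, hf⟩ := q.1.2
    have hx : q.1.1.2 = x := Option.some.inj q.2
    rw [hx] at hf
    have hyy : y' = y := Option.some.inj (hf.symm.trans hy)
    rw [hyy] at hg
    exact hg⟩
  left_inv w := Subtype.ext rfl
  right_inv q := by
    apply Subtype.ext
    apply Subtype.ext
    have hx : q.1.1.2 = x := Option.some.inj q.2
    exact Prod.ext rfl hx.symm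

/-- Identification of the fiber of the first projection of `Z ×_Y X` over `z`
with the fiber of `f` over `g z`. -/
def fpFiberFst {X Y Z : Type} (g : Z → Option Y) (f : X → Option Y) {z : Z} {y : Y}
    (hy : g z = some y) : pfib f y ≃ pfib (fpFst g f) z where
  toFun w := ⟨⟨(z, w.1), ⟨y, hy, w.2⟩⟩, rfl⟩
  invFun q := ⟨q.1.1.2, by
    obtain ⟨y', hg, hf⟩ := q.1.2
    have hz : q.1.1.1 = z := Option.some.inj q.2
    rw [hz] at hg
    have hyy : y' = y := Option.some.inj (hg.symm.trans hy)
    rw [hyy] at hf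
    exact hf⟩
  left_inv w := Subtype.ext rfl
  right_inv q := by
    apply Subtype.ext
    apply Subtype.ext
    have hz : q.1.1.1 = z := Option.some.inj q.2
    exact Prod.ext hz.symm rfl
/-! ### Generalized rings

A generalized ring assigns to each finite set `X` a pointed set `A X`, functorially
with respect to bijections (and hence, via the operations and units, with respect to
all partial bijections of finite sets), together with operations of multiplication
`∘ : A Y × A f → A X` and contraction `( , ) : A X × A f → A Y` for every partially
defined map `f : X ⇀ Y`, where `A f = ∏_{y ∈ Y} A (f⁻¹ y)`, and a unit `1 ∈ A [1]`,
subject to the axioms of associativity, left- and right-adjunction, left- and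
right-linearity, and the unit axioms. -/

/-- The data underlying a generalized ring. -/
structure GenRingData where
  /-- the pointed set attached to a finite set `X` -/
  A : (X : Type) → [inst : Finite X] → Type
  /-- the base point `0_X ∈ A_X` -/
  zero : (X : Type) → [inst : Finite X] → A X
  /-- the unit `1 ∈ A_{[1]}` -/
  one : A (Fin 1)
  /-- functoriality with respect to bijections of finite sets -/
  map : {X Y : Type} → [inst : Finite X] → [inst' : Finite Y] → (X ≃ Y) → A X → A Y
  /-- multiplication `∘ : A_Y × A_f → A_X` for a partially defined map `f : X ⇀ Y` -/
  mul : {X Y : Type} → [inst : Finite X] → [inst' : Finite Y] → (f : X → Option Y) →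
      A Y → ((y : Y) → A (pfib f y)) → A X
  /-- contraction `( , ) : A_X × A_f → A_Y` for a partially defined map `f : X ⇀ Y` -/
  contr : {X Y : Type} → [inst : Finite X] → [inst' : Finite Y] → (f : X → Option Y) →
      A X → ((y : Y) → A (pfib f y)) → A Y

namespace GenRingData

variable (R : GenRingData)

/-- The unit family `1_{id_X} ∈ A_{id_X}`. -/
def oneId (X : Type) [Finite X] : (x : X) → R.A (pfib (fun x' : X => some x') x) :=
  fun x => R.map (idFiberEquiv x) R.one

/-- The monoid operation `a ∘ b` on `A_{[1]}`. -/
def op (a b : R.A (Fin 1)) : R.A (Fin 1) :=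
  R.mul (fun z : Fin 1 => some z) a (fun z => R.map (idFiberEquiv z) b)

/-- The `n`-fold power `a ∘ ⋯ ∘ a` in the monoid `A_{[1]}` (with `a⁰ = 1`). -/
def opPow (a : R.A (Fin 1)) : ℕ → R.A (Fin 1)
  | 0 => R.one
  | n + 1 => R.op a (opPow a n)

/-- The left action `s ∘ a` of `A_{[1]}` on `A_X` (operation (1.2.5)). -/
def lact {X : Type} [Finite X] (s : R.A (Fin 1)) (a : R.A X) : R.A X :=
  R.mul (fun _ : X => some (0 : Fin 1)) s (fun z => R.map (constFiberEquiv X z) a)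

/-- The pairing `(a, d) : A_X × A_X → A_{[1]}` (operation (1.2.6)). -/
def pair {X : Type} [Finite X] (a d : R.A X) : R.A (Fin 1) :=
  R.contr (fun _ : X => some (0 : Fin 1)) a (fun z => R.map (constFiberEquiv X z) d)

/-- The right (diagonal) action `b ∘ c` of `(A_{[1]})^X` on `A_X` (operation (1.2.7)). -/
def ract {X : Type} [Finite X] (b : R.A X) (c : X → R.A (Fin 1)) : R.A X :=
  R.mul (fun x : X => some x) b (fun x => R.map (idFiberEquiv x) (c x))

/-- The involution `a ↦ aᵗ = (1, a)` of `A_{[1]}`. -/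
def adj (a : R.A (Fin 1)) : R.A (Fin 1) := R.pair R.one a

/-- The element `(a, 1_{j_x}) ∈ A_X` obtained from `a ∈ A_{[1]}` via the
inclusion `j_x : {x} ↪ X`; for `a = 1` this is the image `1_x` of the unit. -/
def pointElt (X : Type) [Finite X] (x : X) (a : R.A (Fin 1)) : R.A X :=
  R.contr (fun _ : Fin 1 => some x) a
    (fun x' => if h : x = x' then R.map (pointFiberEquiv h) R.one else R.zero _)

/-- The extended multiplication `A_g × A_f → A_{g∘f}`, defined fiberwise. -/
def emul {X Y Z : Type} [Finite X] [Finite Y] [Finite Z]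
    (g : Y → Option Z) (f : X → Option Y)
    (c : (z : Z) → R.A (pfib g z)) (b : (y : Y) → R.A (pfib f y)) :
    (z : Z) → R.A (pfib (pcomp g f) z) :=
  fun z => R.mul (resMap g f z) (c z) (fun p => R.map (resFiberEquiv g f z p) (b p.1))

/-- The extended contraction `A_{g∘f} × A_f → A_g`, defined fiberwise. -/
def econtr {X Y Z : Type} [Finite X] [Finite Y] [Finite Z]
    (g : Y → Option Z) (f : X → Option Y)
    (a : (z : Z) → R.A (pfib (pcomp g f) z)) (b : (y : Y) → R.A (pfib f y)) :
    (z : Z) → R.A (pfib g z) :=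
  fun z => R.contr (resMap g f z) (a z) (fun p => R.map (resFiberEquiv g f z p) (b p.1))

/-- The pullback `ã ∈ A_{g̃}` of `a ∈ A_g` along the fibered product (used in
the right-linearity axiom). -/
def atilde {X Y Z : Type} [Finite X] [Finite Y] [Finite Z]
    (g : Z → Option Y) (f : X → Option Y) (a : (y : Y) → R.A (pfib g y)) :
    (x : X) → R.A (pfib (fpSnd g f) x) :=
  fun x =>
    match hfx : f x with
    | some y => R.map (fpFiberSnd g f hfx) (a y)
    | none => R.zero _

/-- The pullback `c̃ ∈ A_{f̃}` of `c ∈ A_f` along the fibered product (used in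
the right-linearity axiom). -/
def ctilde {X Y Z : Type} [Finite X] [Finite Y] [Finite Z]
    (g : Z → Option Y) (f : X → Option Y) (c : (y : Y) → R.A (pfib f y)) :
    (z : Z) → R.A (pfib (fpFst g f) z) :=
  fun z =>
    match hgz : g z with
    | some y => R.map (fpFiberFst g f hgz) (c y)
    | none => R.zero _

end GenRingData

/-- A generalized ring: the data of `GenRingData` subject to the axioms
(pointedness, functoriality, zero laws, associativity, left/right adjunction,
left/right linearity, and the unit axioms, the latter in their reduced form over
the one-point base, which is equivalent to the general form). -/
structure GenRing where
  /-- the underlying data -/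
  data : GenRingData
  /-- `A_∅ = {0}` -/
  isEmpty_eq_zero : ∀ (X : Type) [Finite X] [IsEmpty X] (a : data.A X), a = data.zero X
  /-- functoriality: identity -/
  map_refl : ∀ (X : Type) [Finite X] (a : data.A X), data.map (Equiv.refl X) a = a
  /-- functoriality: composition -/
  map_trans : ∀ {X Y Z : Type} [Finite X] [Finite Y] [Finite Z] (e : X ≃ Y) (e' : Y ≃ Z)
      (a : data.A X), data.map (e.trans e') a = data.map e' (data.map e a)
  /-- functoriality: the maps are pointed -/
  map_zero : ∀ {X Y : Type} [Finite X] [Finite Y] (e : X ≃ Y),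
      data.map e (data.zero X) = data.zero Y
  /-- `0 ∘ b = 0` -/
  mul_zero_left : ∀ {X Y : Type} [Finite X] [Finite Y] (f : X → Option Y)
      (b : (y : Y) → data.A (pfib f y)), data.mul f (data.zero Y) b = data.zero X
  /-- `a ∘ 0_f = 0` -/
  mul_zero_right : ∀ {X Y : Type} [Finite X] [Finite Y] (f : X → Option Y) (a : data.A Y),
      data.mul f a (fun y => data.zero (pfib f y)) = data.zero X
  /-- `(0, b) = 0` -/
  contr_zero_left : ∀ {X Y : Type} [Finite X] [Finite Y] (f : X → Option Y)
      (b : (y : Y) → data.A (pfib f y)), data.contr f (data.zero X) b = data.zero Y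
  /-- `(a, 0_f) = 0` -/
  contr_zero_right : ∀ {X Y : Type} [Finite X] [Finite Y] (f : X → Option Y) (a : data.A X),
      data.contr f a (fun y => data.zero (pfib f y)) = data.zero Y
  /-- associativity: `d ∘ (c ∘ b) = (d ∘ c) ∘ b` -/
  assoc : ∀ {X Y Z : Type} [Finite X] [Finite Y] [Finite Z]
      (g : Y → Option Z) (f : X → Option Y) (d : data.A Z)
      (c : (z : Z) → data.A (pfib g z)) (b : (y : Y) → data.A (pfib f y)),
      data.mul (pcomp g f) d (data.emul g f c b) = data.mul f (data.mul g d c) b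
  /-- left-adjunction: `(d, a ∘ c) = ((d, c), a)` -/
  left_adj : ∀ {X Y Z : Type} [Finite X] [Finite Y] [Finite Z]
      (g : Y → Option Z) (f : X → Option Y) (d : data.A X)
      (a : (z : Z) → data.A (pfib g z)) (c : (y : Y) → data.A (pfib f y)),
      data.contr (pcomp g f) d (data.emul g f a c) = data.contr g (data.contr f d c) a
  /-- right-adjunction: `(d ∘ c, a) = (d, (a, c))` -/
  right_adj : ∀ {X Y Z : Type} [Finite X] [Finite Y] [Finite Z]
      (g : Y → Option Z) (f : X → Option Y) (d : data.A Y)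
      (a : (z : Z) → data.A (pfib (pcomp g f) z)) (c : (y : Y) → data.A (pfib f y)),
      data.contr (pcomp g f) (data.mul f d c) a = data.contr g d (data.econtr g f a c)
  /-- left-linearity: `(d ∘ a, c) = d ∘ (a, c)` -/
  left_lin : ∀ {X Y Z : Type} [Finite X] [Finite Y] [Finite Z]
      (g : Y → Option Z) (f : X → Option Y) (d : data.A Z)
      (a : (z : Z) → data.A (pfib (pcomp g f) z)) (c : (y : Y) → data.A (pfib f y)),
      data.contr f (data.mul (pcomp g f) d a) c = data.mul g d (data.econtr g f a c)
  /-- right-linearity: `(d, c) ∘ a = (d ∘ ã, c̃)`, with `ã`, `c̃` the pullbacks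
  along the fibered product `Z ×_Y X` -/
  right_lin : ∀ {X Y Z : Type} [Finite X] [Finite Y] [Finite Z]
      (g : Z → Option Y) (f : X → Option Y) (d : data.A X)
      (a : (y : Y) → data.A (pfib g y)) (c : (y : Y) → data.A (pfib f y)),
      data.mul g (data.contr f d c) a
        = data.contr (fpFst g f) (data.mul (fpSnd g f) d (data.atilde g f a))
            (data.ctilde g f c)
  /-- unit axiom: `a ∘ 1_{id_X} = a` -/
  mul_one_id : ∀ (X : Type) [Finite X] (a : data.A X),
      data.mul (fun x : X => some x) a (data.oneId X) = a
  /-- unit axiom: `1 ∘ a = a` -/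
  one_lact : ∀ (X : Type) [Finite X] (a : data.A X), data.lact data.one a = a
  /-- unit axiom: `(a, 1_{id_X}) = a` -/
  contr_one_id : ∀ (X : Type) [Finite X] (a : data.A X),
      data.contr (fun x : X => some x) a (data.oneId X) = a
  /-- unit axiom (1.8.11): `(a, 1_f) = f_A(a)` for a bijection `f = e` -/
  map_eq_contr : ∀ {X Y : Type} [Finite X] [Finite Y] (e : X ≃ Y) (a : data.A X),
      data.contr (fun x : X => some (e x)) a
        (fun y => data.map (equivFiberEquiv e y) data.one) = data.map e a
  /-- unit axiom (1.8.11): `a ∘ 1_{fᵗ} = f_A(a)` for a bijection `f = e` -/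
  map_eq_mul : ∀ {X Y : Type} [Finite X] [Finite Y] (e : X ≃ Y) (a : data.A X),
      data.mul (fun y : Y => some (e.symm y)) a
        (fun x => data.map (equivFiberEquiv e.symm x) data.one) = data.map e a
namespace GenRing

variable (R : GenRing)

/-- An `h`-ideal of a generalized ring: a subset `I ⊆ A_{[1]}` such that
`(b ∘ c, d) ∈ I` for all finite `X`, all `b, d ∈ A_X` and all `c ∈ I^X ⊆ (A_{[1]})^X`. -/
def IsHIdeal (I : Set (R.data.A (Fin 1))) : Prop :=
  ∀ (X : Type) [Finite X], ∀ (b d : R.data.A X) (c : X → R.data.A (Fin 1)),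
    (∀ x, c x ∈ I) → R.data.pair (R.data.ract b c) d ∈ I

/-- A prime of a generalized ring: a proper `h`-ideal `P` whose complement is
closed under the multiplication of `A_{[1]}`. -/
def IsPrimeH (P : Set (R.data.A (Fin 1))) : Prop :=
  R.IsHIdeal P ∧ R.data.one ∉ P ∧
    ∀ a b : R.data.A (Fin 1), R.data.op a b ∈ P → a ∈ P ∨ b ∈ P

end GenRing

/-- The spectrum of a generalized ring: the set of its primes. -/
structure SpecG (R : GenRing) where
  /-- the underlying prime `h`-ideal -/
  I : Set (R.data.A (Fin 1))
  /-- it is prime -/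
  prime : R.IsPrimeH I

namespace GenRing

variable (R : GenRing)

/-- The basic open set `D_a = {𝔭 : a ∉ 𝔭}` of the Zariski topology. -/
def basicOpen (a : R.data.A (Fin 1)) : Set (SpecG R) := {p | a ∉ p.I}

/-- The closed set `V(s) = {𝔭 : 𝔭 ⊇ s}` of the Zariski topology. -/
def zeroLocus (s : Set (R.data.A (Fin 1))) : Set (SpecG R) := {p | s ⊆ p.I}

/-- The Zariski topology on the spectrum, generated by the basic open sets. -/
instance : TopologicalSpace (SpecG R) :=
  TopologicalSpace.generateFrom {U | ∃ a : R.data.A (Fin 1), U = R.basicOpen a}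

end GenRing

/-- A homomorphism of generalized rings: a (pointed, natural) family of maps
preserving multiplication, contraction and the unit. -/
structure GenRingHom (R S : GenRing) where
  /-- the underlying family of maps -/
  app : (X : Type) → [inst : Finite X] → R.data.A X → S.data.A X
  /-- zero is preserved -/
  app_zero : ∀ (X : Type) [Finite X], app X (R.data.zero X) = S.data.zero X
  /-- the unit is preserved -/
  app_one : app (Fin 1) R.data.one = S.data.one
  /-- naturality with respect to bijections -/
  app_map : ∀ {X Y : Type} [Finite X] [Finite Y] (e : X ≃ Y) (a : R.data.A X),
      app Y (R.data.map e a) = S.data.map e (app X a)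
  /-- multiplication is preserved -/
  app_mul : ∀ {X Y : Type} [Finite X] [Finite Y] (f : X → Option Y)
      (a : R.data.A Y) (b : (y : Y) → R.data.A (pfib f y)),
      app X (R.data.mul f a b) = S.data.mul f (app Y a) (fun y => app (pfib f y) (b y))
  /-- contraction is preserved -/
  app_contr : ∀ {X Y : Type} [Finite X] [Finite Y] (f : X → Option Y)
      (a : R.data.A X) (b : (y : Y) → R.data.A (pfib f y)),
      app Y (R.data.contr f a b) = S.data.contr f (app X a) (fun y => app (pfib f y) (b y))

namespace GenRingHom

variable {R S : GenRing} (φ : GenRingHom R S)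

theorem app_op (a b : R.data.A (Fin 1)) :
    φ.app (Fin 1) (R.data.op a b) = S.data.op (φ.app (Fin 1) a) (φ.app (Fin 1) b) := by
  unfold GenRingData.op
  rw [φ.app_mul]
  congr 1
  funext z
  rw [φ.app_map]

theorem app_ract {X : Type} [Finite X] (b : R.data.A X) (c : X → R.data.A (Fin 1)) :
    φ.app X (R.data.ract b c) = S.data.ract (φ.app X b) (fun x => φ.app (Fin 1) (c x)) := by
  unfold GenRingData.ract
  rw [φ.app_mul]
  congr 1
  funext x
  rw [φ.app_map]

theorem app_pair {X : Type} [Finite X] (a d : R.data.A X) :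
    φ.app (Fin 1) (R.data.pair a d) = S.data.pair (φ.app X a) (φ.app X d) := by
  unfold GenRingData.pair
  rw [φ.app_contr]
  congr 1
  funext z
  rw [φ.app_map]

theorem app_lact {X : Type} [Finite X] (s : R.data.A (Fin 1)) (a : R.data.A X) :
    φ.app X (R.data.lact s a) = S.data.lact (φ.app (Fin 1) s) (φ.app X a) := by
  unfold GenRingData.lact
  rw [φ.app_mul]
  congr 1
  funext z
  rw [φ.app_map]

/-- The map `spec(φ) : spec(S) → spec(R)`, `𝔮 ↦ φ_{[1]}⁻¹(𝔮)`, induced by a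
homomorphism of generalized rings `φ : R → S`. -/
def specMap (q : SpecG S) : SpecG R where
  I := φ.app (Fin 1) ⁻¹' q.I
  prime := by
    refine ⟨?_, ?_, ?_⟩
    · intro X _ b d c hc
      show φ.app (Fin 1) (R.data.pair (R.data.ract b c) d) ∈ q.I
      rw [φ.app_pair, φ.app_ract]
      exact q.prime.1 X (φ.app X b) (φ.app X d) (fun x => φ.app (Fin 1) (c x)) hc
    · show φ.app (Fin 1) R.data.one ∉ q.I
      rw [φ.app_one]
      exact q.prime.2.1
    · intro a b hab
      have h : S.data.op (φ.app (Fin 1) a) (φ.app (Fin 1) b) ∈ q.I := by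
        rw [← φ.app_op]; exact hab
      exact q.prime.2.2 _ _ h

end GenRingHom

/-- An equivalence ideal of a generalized ring: a family of equivalence relations
on the sets `A_X` respecting the operations of multiplication and contraction. -/
structure EqvIdeal (R : GenRing) where
  /-- the family of relations -/
  rel : (X : Type) → [inst : Finite X] → R.data.A X → R.data.A X → Prop
  refl : ∀ (X : Type) [Finite X] (a : R.data.A X), rel X a a
  symm : ∀ (X : Type) [Finite X] {a b : R.data.A X}, rel X a b → rel X b a
  trans : ∀ (X : Type) [Finite X] {a b c : R.data.A X}, rel X a b → rel X b c → rel X a c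
  /-- `a ∼ a'` implies `a ∘ b ∼ a' ∘ b` -/
  mul_left : ∀ {X Y : Type} [Finite X] [Finite Y] (f : X → Option Y) {a a' : R.data.A Y}
      (b : (y : Y) → R.data.A (pfib f y)),
      rel Y a a' → rel X (R.data.mul f a b) (R.data.mul f a' b)
  /-- `b ∼ b'` (componentwise) implies `a ∘ b ∼ a ∘ b'` -/
  mul_right : ∀ {X Y : Type} [Finite X] [Finite Y] (f : X → Option Y) (a : R.data.A Y)
      {b b' : (y : Y) → R.data.A (pfib f y)},
      (∀ y, rel (pfib f y) (b y) (b' y)) → rel X (R.data.mul f a b) (R.data.mul f a b')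
  /-- `a ∼ a'` implies `(a, b) ∼ (a', b)` -/
  contr_left : ∀ {X Y : Type} [Finite X] [Finite Y] (f : X → Option Y) {a a' : R.data.A X}
      (b : (y : Y) → R.data.A (pfib f y)),
      rel X a a' → rel Y (R.data.contr f a b) (R.data.contr f a' b)
  /-- `b ∼ b'` (componentwise) implies `(a, b) ∼ (a, b')` -/
  contr_right : ∀ {X Y : Type} [Finite X] [Finite Y] (f : X → Option Y) (a : R.data.A X)
      {b b' : (y : Y) → R.data.A (pfib f y)},
      (∀ y, rel (pfib f y) (b y) (b' y)) → rel Y (R.data.contr f a b) (R.data.contr f a b')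

namespace GenRing

variable (R : GenRing)

/-- The equivalence ideal `E(I)` generated by an (`h`-)ideal `I`: `a ∼ b` iff the
pair `(a, b)` belongs to every equivalence ideal containing `(i, 0)` for all `i ∈ I`. -/
def erel (I : Set (R.data.A (Fin 1))) (X : Type) [Finite X] (a b : R.data.A X) : Prop :=
  ∀ ε : EqvIdeal R, (∀ i ∈ I, ε.rel (Fin 1) i (R.data.zero (Fin 1))) → ε.rel X a b

/-- A stable `h`-ideal: an `h`-ideal `I` such that for every pair `(a, b)` in the
equivalence ideal `E(I)` generated by `I` one has `a ∈ I ↔ b ∈ I`. -/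
def IsStableHIdeal (I : Set (R.data.A (Fin 1))) : Prop :=
  R.IsHIdeal I ∧ ∀ a b : R.data.A (Fin 1), R.erel I (Fin 1) a b → (a ∈ I ↔ b ∈ I)

/-- A multiplicative subset of `A_{[1]}`: contains `1`, closed under `∘`,
and stable under the involution. -/
def IsMulSet (S : Set (R.data.A (Fin 1))) : Prop :=
  R.data.one ∈ S ∧ (∀ a ∈ S, ∀ b ∈ S, R.data.op a b ∈ S) ∧
    (∀ a, a ∈ S ↔ R.data.adj a ∈ S)

/-- `φ : R → L` presents `L` as the localization `S⁻¹R` of `R` at the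
multiplicative subset `S ⊆ A_{[1]}`: every element of `S` becomes invertible, every
element of `L` is a fraction `φ(a)/φ(s)`, and `φ(a) = φ(b)` iff `s ∘ a = s ∘ b`
for some `s ∈ S`. -/
def IsLocalizationAt (S : Set (R.data.A (Fin 1))) {L : GenRing} (φ : GenRingHom R L) : Prop :=
  (∀ s ∈ S, ∃ t : L.data.A (Fin 1),
      L.data.op t (φ.app (Fin 1) s) = L.data.one ∧
      L.data.op (φ.app (Fin 1) s) t = L.data.one) ∧
  (∀ (X : Type) [Finite X], ∀ l : L.data.A X, ∃ (a : R.data.A X) (s : R.data.A (Fin 1)),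
      s ∈ S ∧ L.data.lact (φ.app (Fin 1) s) l = φ.app X a) ∧
  (∀ (X : Type) [Finite X], ∀ a b : R.data.A X,
      φ.app X a = φ.app X b ↔ ∃ s ∈ S, R.data.lact s a = R.data.lact s b)

end GenRing

namespace GenRing

variable (R : GenRing)

theorem pair_zero_left {X : Type} [Finite X] (d : R.data.A X) :
    R.data.pair (R.data.zero X) d = R.data.zero (Fin 1) :=
  R.contr_zero_left _ _

theorem ract_zero_right {X : Type} [Finite X] (b : R.data.A X) :
    R.data.ract b (fun _ => R.data.zero (Fin 1)) = R.data.zero X := by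
  unfold GenRingData.ract
  simp only [R.map_zero]
  exact R.mul_zero_right _ _

theorem isHIdeal_singleton_zero : R.IsHIdeal {R.data.zero (Fin 1)} := by
  intro X _ b d c hc
  obtain rfl : c = fun _ => R.data.zero (Fin 1) := funext hc
  rw [ract_zero_right, pair_zero_left]
  rfl

/-- The coefficients `c x` form a finite set, so they all lie in a single member of `C`. -/
theorem isHIdeal_sUnion {C : Set (Set (R.data.A (Fin 1)))} (hC : ∀ I ∈ C, R.IsHIdeal I)
    (hne : C.Nonempty) (hdir : DirectedOn (· ⊆ ·) C) : R.IsHIdeal (⋃₀ C) := by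
  intro X _ b d c hc
  obtain ⟨I, hIC, hcI⟩ := hdir.exists_mem_subset_of_finite_of_subset_sUnion hne
    (Set.finite_range c) (Set.range_subset_iff.2 hc)
  exact Set.mem_sUnion_of_mem (hC I hIC X b d c fun x => hcI ⟨x, rfl⟩) hIC

end GenRing

/-- **Existence of maximal proper `h`-ideals.**  Every generalized ring `R` in which
`1 ≠ 0` in `A_{[1]}` possesses a maximal proper `h`-ideal, i.e. a proper `h`-ideal
not strictly contained in any other proper `h`-ideal. -/
theorem exists_maximal_proper_hIdeal (R : GenRing)
    (h : R.data.one ≠ R.data.zero (Fin 1)) :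
    ∃ m : Set (R.data.A (Fin 1)), R.IsHIdeal m ∧ R.data.one ∉ m ∧
      ∀ b : Set (R.data.A (Fin 1)), R.IsHIdeal b → R.data.one ∉ b → m ⊆ b → b = m := by
  set P : Set (Set (R.data.A (Fin 1))) := {I | R.IsHIdeal I ∧ R.data.one ∉ I}
  have hchain : ∀ C ⊆ P, IsChain (· ⊆ ·) C → C.Nonempty → ∃ ub ∈ P, ∀ I ∈ C, I ⊆ ub :=
    fun C hCP hC hne =>
      ⟨⋃₀ C, ⟨R.isHIdeal_sUnion (fun I hI => (hCP hI).1) hne hC.directedOn,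
        fun ⟨I, hI, h1I⟩ => (hCP hI).2 h1I⟩, fun _ => Set.subset_sUnion_of_mem⟩
  obtain ⟨m, -, hm⟩ := zorn_subset_nonempty P hchain _ ⟨R.isHIdeal_singleton_zero, h⟩
  exact ⟨m, hm.prop.1, hm.prop.2, fun b hb h1b hmb => (hm.eq_of_subset ⟨hb, h1b⟩ hmb).symm⟩

end
end

section
/- The sequence of abelian groups 1 → {±1} → ℚˣ → (⊕_p ℤ) ⊕ ℝ → ℝ_{>0}ˣ → 1 is exact, where the direct sum is over all prime numbers p, the map div : ℚˣ → (⊕_p ℤ) ⊕ ℝ sends f to ((ν_p(f))_p, −log|f|) with ν_p the p-adic valuation and |·| the usual archimedean absolute value, and the map (⊕_p ℤ) ⊕ ℝ → ℝ_{>0}ˣ sends ((n_p)_p, t) to e^t · ∏_p p^{n_p}. That is: div is a group homomorphism with kernel {±1}; the second map is a surjective group homomorphism; and its kernel equals the image of div. -/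
/-! Every positive rational is `∏_p p^(ν_p)` and the primes are independent, so `div` identifies
`ℚˣ / {±1}` with `⊕_p ℤ`; the logarithm of the archimedean absolute value is chosen so that
`e^t · ∏_p p^(n_p)` is `|f|⁻¹ · |f| = 1` on `div f`, and conversely a vector `(n_p)` determines
`f = ∏_p p^(n_p)` up to sign, after which `t` is forced by `e^t · |f| = 1`. -/

noncomputable section

/-- The map `(⊕_p ℤ) ⊕ ℝ → ℝ`, `((n_p)_p, t) ↦ e^t · ∏_p p^(n_p)`. -/
def expProdMap (x : (Nat.Primes →₀ ℤ) × ℝ) : ℝ :=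
  Real.exp x.2 * ∏ p ∈ x.1.support, ((p : ℕ) : ℝ) ^ (x.1 p)

def primeFactorization (n : ℕ) : Nat.Primes →₀ ℤ :=
  (n.factorization.mapRange Int.ofNat rfl).comapDomain ((↑) : Nat.Primes → ℕ)
    Nat.Primes.coe_nat_injective.injOn

theorem primeFactorization_apply (n : ℕ) (p : Nat.Primes) :
    primeFactorization n p = n.factorization p :=
  rfl

theorem primeFactorization_one : primeFactorization 1 = 0 := by
  ext p
  simp [primeFactorization_apply]

theorem primeFactorization_mul {a b : ℕ} (ha : a ≠ 0) (hb : b ≠ 0) :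
    primeFactorization (a * b) = primeFactorization a + primeFactorization b := by
  ext p
  simp [primeFactorization_apply, Nat.factorization_mul ha hb]

theorem primeFactorization_prime (p : Nat.Primes) :
    primeFactorization p = Finsupp.single p 1 := by
  ext q
  rw [primeFactorization_apply, p.2.factorization, Finsupp.single_apply, Finsupp.single_apply]
  simp [Nat.Primes.coe_nat_inj]

def primeProd (c : Nat.Primes →₀ ℤ) : ℝ :=
  c.prod fun p n => ((p : ℕ) : ℝ) ^ n

theorem primeProd_zero : primeProd 0 = 1 :=
  Finsupp.prod_zero_index

theorem primeProd_add (a b : Nat.Primes →₀ ℤ) : primeProd (a + b) = primeProd a * primeProd b :=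
  Finsupp.prod_add_index' (fun _ => zpow_zero _)
    fun p => zpow_add₀ (Nat.cast_ne_zero.mpr p.2.ne_zero)

theorem primeProd_neg (a : Nat.Primes →₀ ℤ) : primeProd (-a) = (primeProd a)⁻¹ := by
  refine eq_inv_of_mul_eq_one_left ?_
  rw [← primeProd_add, neg_add_cancel, primeProd_zero]

theorem primeProd_single (p : Nat.Primes) (n : ℤ) :
    primeProd (Finsupp.single p n) = ((p : ℕ) : ℝ) ^ n :=
  Finsupp.prod_single_index (zpow_zero _)

theorem primeProd_pos (c : Nat.Primes →₀ ℤ) : 0 < primeProd c :=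
  Finset.prod_pos fun p _ => zpow_pos (Nat.cast_pos.mpr p.2.pos) _

theorem primeProd_primeFactorization {n : ℕ} (hn : n ≠ 0) :
    primeProd (primeFactorization n) = n := by
  induction n using Nat.recOnMul with
  | zero => exact absurd rfl hn
  | one => rw [primeFactorization_one, primeProd_zero, Nat.cast_one]
  | prime p hp =>
    exact (congrArg primeProd (primeFactorization_prime ⟨p, hp⟩)).trans
      ((primeProd_single _ 1).trans (zpow_one _))
  | mul a b iha ihb =>
    obtain ⟨ha, hb⟩ := mul_ne_zero_iff.mp hn
    rw [primeFactorization_mul ha hb, primeProd_add, iha ha, ihb hb, Nat.cast_mul]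

def ratValuation (q : ℚ) : Nat.Primes →₀ ℤ :=
  primeFactorization q.num.natAbs - primeFactorization q.den

theorem ratValuation_apply (q : ℚ) (p : Nat.Primes) :
    ratValuation q p = padicValRat p q := by
  rw [ratValuation, Finsupp.sub_apply, primeFactorization_apply, primeFactorization_apply,
    padicValRat_def, padicValInt, Nat.factorization_def _ p.2, Nat.factorization_def _ p.2]

theorem ratValuation_mul {q r : ℚ} (hq : q ≠ 0) (hr : r ≠ 0) :
    ratValuation (q * r) = ratValuation q + ratValuation r := by
  ext p
  have : Fact (p : ℕ).Prime := ⟨p.2⟩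
  simp only [Finsupp.add_apply, ratValuation_apply, padicValRat.mul hq hr]

theorem ratValuation_one : ratValuation 1 = 0 := by
  ext p
  rw [ratValuation_apply, padicValRat.one, Finsupp.zero_apply]

theorem ratValuation_neg (q : ℚ) : ratValuation (-q) = ratValuation q := by
  ext p
  rw [ratValuation_apply, ratValuation_apply, padicValRat.neg]

theorem ratValuation_prime (p : Nat.Primes) : ratValuation (p : ℕ) = Finsupp.single p 1 := by
  rw [ratValuation, Rat.num_natCast, Rat.den_natCast, Int.natAbs_natCast,
    primeFactorization_prime, primeFactorization_one, sub_zero]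

theorem primeProd_ratValuation {q : ℚ} (hq : q ≠ 0) : primeProd (ratValuation q) = |(q : ℝ)| := by
  rw [ratValuation, sub_eq_add_neg, primeProd_add, primeProd_neg,
    primeProd_primeFactorization (Int.natAbs_ne_zero.mpr (Rat.num_ne_zero.mpr hq)),
    primeProd_primeFactorization q.den_nz, Rat.cast_def, abs_div, Nat.cast_natAbs, Int.cast_abs,
    Nat.abs_cast, div_eq_mul_inv]

def ratValuationHom : ℚˣ →* Multiplicative (Nat.Primes →₀ ℤ) where
  toFun u := .ofAdd (ratValuation u)
  map_one' := by rw [Units.val_one, ratValuation_one, ofAdd_zero]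
  map_mul' u v := by rw [Units.val_mul, ratValuation_mul u.ne_zero v.ne_zero, ofAdd_add]

theorem exists_ratValuation_eq (c : Nat.Primes →₀ ℤ) : ∃ u : ℚˣ, ratValuation u = c := by
  let primeUnit (p : Nat.Primes) : ℚˣ := Units.mk0 (p : ℕ) (Nat.cast_ne_zero.mpr p.2.ne_zero)
  refine ⟨c.prod fun p n => primeUnit p ^ n, ?_⟩
  change (ratValuationHom (c.prod fun p n => primeUnit p ^ n)).toAdd = c
  rw [map_finsuppProd, Finsupp.prod, toAdd_prod]
  conv_rhs => rw [← Finsupp.sum_single c]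
  refine Finset.sum_congr rfl fun p _ => ?_
  rw [map_zpow, toAdd_zpow]
  change c p • ratValuation (p : ℕ) = _
  rw [ratValuation_prime, Finsupp.smul_single_one]

def ratDivisor (f : ℚˣ) : (Nat.Primes →₀ ℤ) × ℝ :=
  (ratValuation f, -Real.log |((f : ℚ) : ℝ)|)

theorem abs_ratCast_units_pos (f : ℚˣ) : 0 < |((f : ℚ) : ℝ)| :=
  abs_pos.mpr (Rat.cast_ne_zero.mpr f.ne_zero)

theorem ratDivisor_mul (f g : ℚˣ) : ratDivisor (f * g) = ratDivisor f + ratDivisor g := by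
  refine Prod.ext (ratValuation_mul f.ne_zero g.ne_zero) ?_
  simp only [ratDivisor, Prod.snd_add, Units.val_mul, Rat.cast_mul, abs_mul,
    Real.log_mul (abs_ratCast_units_pos f).ne' (abs_ratCast_units_pos g).ne', neg_add]

theorem ratDivisor_eq_zero_iff (f : ℚˣ) : ratDivisor f = 0 ↔ (f : ℚ) = 1 ∨ (f : ℚ) = -1 := by
  constructor
  · intro h
    -- `|f| = ∏_p p^(ν_p f)` is already forced to be `1` by the finite part of `div f`
    have habs : |((f : ℚ) : ℝ)| = 1 := by
      rw [← primeProd_ratValuation f.ne_zero, show ratValuation f = 0 from congrArg Prod.fst h,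
        primeProd_zero]
    rw [← abs_eq zero_le_one, ← Rat.cast_inj (α := ℝ), Rat.cast_abs, habs, Rat.cast_one]
  · rintro (h | h) <;> simp [ratDivisor, h, ratValuation_neg, ratValuation_one]

theorem expProdMap_eq (x : (Nat.Primes →₀ ℤ) × ℝ) : expProdMap x = Real.exp x.2 * primeProd x.1 :=
  rfl

theorem expProdMap_add (x y : (Nat.Primes →₀ ℤ) × ℝ) :
    expProdMap (x + y) = expProdMap x * expProdMap y := by
  simp only [expProdMap_eq, Prod.fst_add, Prod.snd_add, Real.exp_add, primeProd_add]
  ring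

theorem expProdMap_pos (x : (Nat.Primes →₀ ℤ) × ℝ) : 0 < expProdMap x :=
  mul_pos (Real.exp_pos _) (primeProd_pos _)

theorem expProdMap_zero_log {r : ℝ} (hr : 0 < r) : expProdMap (0, Real.log r) = r := by
  rw [expProdMap_eq, primeProd_zero, Real.exp_log hr, mul_one]

theorem expProdMap_ratDivisor (f : ℚˣ) : expProdMap (ratDivisor f) = 1 := by
  rw [expProdMap_eq, ratDivisor, primeProd_ratValuation f.ne_zero, Real.exp_neg,
    Real.exp_log (abs_ratCast_units_pos f), inv_mul_cancel₀ (abs_ratCast_units_pos f).ne']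

theorem expProdMap_eq_one_iff (x : (Nat.Primes →₀ ℤ) × ℝ) :
    expProdMap x = 1 ↔ ∃ f : ℚˣ, ratDivisor f = x := by
  refine ⟨fun hx => ?_, fun ⟨f, hf⟩ => hf ▸ expProdMap_ratDivisor f⟩
  obtain ⟨f, hf⟩ := exists_ratValuation_eq x.1
  refine ⟨f, Prod.ext hf ?_⟩
  have h := (expProdMap_ratDivisor f).trans hx.symm
  rw [expProdMap_eq, expProdMap_eq, ratDivisor, hf] at h
  exact Real.exp_injective (mul_right_cancel₀ (primeProd_pos x.1).ne' h)

/-- **The exact sequence `1 → {±1} → ℚˣ → (⊕_p ℤ) ⊕ ℝ → ℝ_{>0}ˣ → 1`.**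
There is a map `div : ℚˣ → (⊕_p ℤ) ⊕ ℝ`, `f ↦ ((ν_p f)_p, -log |f|)`, and together with the map
`((n_p)_p, t) ↦ e^t · ∏_p p^(n_p)` we get: `div` is a homomorphism with kernel `{±1}`; the second
map is a surjective homomorphism onto the multiplicative group of positive reals; and the kernel
of the second map is the image of `div`. -/
theorem compactified_spec_Z_divisor_sequence_exact :
    ∃ d : ℚˣ → (Nat.Primes →₀ ℤ) × ℝ,
      (∀ (f : ℚˣ) (p : Nat.Primes), (d f).1 p = padicValRat p (f : ℚ)) ∧
      (∀ f : ℚˣ, (d f).2 = - Real.log |((f : ℚ) : ℝ)|) ∧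
      (∀ f g : ℚˣ, d (f * g) = d f + d g) ∧
      (∀ f : ℚˣ, d f = 0 ↔ (f : ℚ) = 1 ∨ (f : ℚ) = -1) ∧
      (∀ x y : (Nat.Primes →₀ ℤ) × ℝ, expProdMap (x + y) = expProdMap x * expProdMap y) ∧
      (∀ x : (Nat.Primes →₀ ℤ) × ℝ, 0 < expProdMap x) ∧
      (∀ r : ℝ, 0 < r → ∃ x : (Nat.Primes →₀ ℤ) × ℝ, expProdMap x = r) ∧
      (∀ x : (Nat.Primes →₀ ℤ) × ℝ, expProdMap x = 1 ↔ ∃ f : ℚˣ, d f = x) :=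
  ⟨ratDivisor, fun f => ratValuation_apply f, fun _ => rfl, ratDivisor_mul, ratDivisor_eq_zero_iff,
    expProdMap_add, expProdMap_pos, fun _ hr => ⟨_, expProdMap_zero_log hr⟩,
    expProdMap_eq_one_iff⟩

end
end
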